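/- Let J, M be symmetric real 3×3 matrices, D a real 3×3 matrix, m, g, l, α, β ∈ ℝ, χ, Γₑ ∈ ℝ³, v_d ∈ ℝ³. Let Ω, v, Γ, Θ : I → ℝ³ be differentiable curves on a real interval I with Π := JΩ + Dv, P := DᵀΩ + Mv, satisfying the controlled underwater-vehicle system Π' = Π × Ω + P × v − m g l χ × Γ + u₁, P' = P × Ω, Γ' = Γ × Ω, Θ' = Θ × Ω, with control u₁(t) = m g l (χ + β Γₑ) × Γ(t) + Θ(t) × (‖v_d‖ (M − αI) v_d). Then the controlled energy E(t) := ½(Π(t)·Ω(t) + P(t)·v(t)) + m g l χ·Γ(t) − m g l (χ + β Γₑ)·Γ(t) + ‖v_d‖ ((M − αI) v_d)·Θ(t) is constant on I. -/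

import Mathlib

open Matrix

/-- The Euclidean norm on ℝ³ (as `Fin 3 → ℝ`). -/
noncomputable def eNorm (v : Fin 3 → ℝ) : ℝ := Real.sqrt (v ⬝ᵥ v)

/-!
The kinetic energy is `½ x ⬝ᵥ K x` for the symmetric block matrix `K = fromBlocks J D Dᵀ M`
and `x = (Ω, v)`, so its derivative is `Π' ⬝ᵥ Ω + P' ⬝ᵥ v`. Substituting the equations of motion,
the gyroscopic terms `Π × Ω`, `P × v`, `P × Ω` do no work, and every torque `a × X` with
`X' = X × Ω` contributes `a ⬝ᵥ X'` by the triple product rule. The gravitational torque and the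
control torque are therefore exactly compensated by the derivatives of the potential terms
`χ ⬝ᵥ Γ`, `(χ + β Γₑ) ⬝ᵥ Γ` and `w ⬝ᵥ Θ` (with `w = (M − αI) v_d`), so the energy has zero
derivative on the interval `I`.
-/

theorem HasDerivAt.sumElim {𝕜 ι κ : Type*} [NontriviallyNormedField 𝕜] [Fintype ι] [Fintype κ]
    {f : 𝕜 → ι → 𝕜} {g : 𝕜 → κ → 𝕜} {f' : ι → 𝕜} {g' : κ → 𝕜} {t : 𝕜}
    (hf : HasDerivAt f f' t) (hg : HasDerivAt g g' t) :
    HasDerivAt (fun s => Sum.elim (f s) (g s)) (Sum.elim f' g') t :=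
  hasDerivAt_pi.2 fun
    | .inl i => hasDerivAt_pi.1 hf i
    | .inr i => hasDerivAt_pi.1 hg i

section Calculus

variable {𝕜 : Type*} [NontriviallyNormedField 𝕜] {ι κ : Type*} [Fintype ι]
  {f g : 𝕜 → ι → 𝕜} {f' g' : ι → 𝕜} {t : 𝕜}

theorem HasDerivAt.dotProduct (hf : HasDerivAt f f' t) (hg : HasDerivAt g g' t) :
    HasDerivAt (fun s => f s ⬝ᵥ g s) (f' ⬝ᵥ g t + f t ⬝ᵥ g') t := by
  simp only [_root_.dotProduct, ← Finset.sum_add_distrib]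
  exact HasDerivAt.fun_sum fun i _ => (hasDerivAt_pi.1 hf i).mul (hasDerivAt_pi.1 hg i)

theorem HasDerivAt.const_dotProduct (c : ι → 𝕜) (hg : HasDerivAt g g' t) :
    HasDerivAt (fun s => c ⬝ᵥ g s) (c ⬝ᵥ g') t := by
  simpa using (hasDerivAt_const t c).dotProduct hg

theorem HasDerivAt.mulVec (A : Matrix κ ι 𝕜) (hf : HasDerivAt f f' t) :
    HasDerivAt (fun s => A *ᵥ f s) (A *ᵥ f') t :=
  hasDerivAt_pi.2 fun i => hf.const_dotProduct (A i)

end Calculus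

theorem Set.OrdConnected.eq_of_hasDerivAt_eq_zero {E : Type*} [NormedAddCommGroup E]
    [NormedSpace ℝ E] {I : Set ℝ} (hI : I.OrdConnected) {f : ℝ → E}
    (hf : ∀ t ∈ I, HasDerivAt f 0 t) : ∀ s ∈ I, ∀ t ∈ I, f s = f t := by
  intro s hs t ht
  have := hI.convex.norm_image_sub_le_of_norm_hasDerivWithin_le
    (fun x hx => (hf x hx).hasDerivWithinAt) (fun _ _ => (norm_zero (E := E)).le) ht hs
  simpa [sub_eq_zero] using this

section Mechanics

variable {ι : Type*} [Fintype ι]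

theorem Matrix.IsSymm.mulVec_dotProduct_comm {A : Matrix ι ι ℝ} (hA : A.IsSymm) (x y : ι → ℝ) :
    A *ᵥ x ⬝ᵥ y = A *ᵥ y ⬝ᵥ x := by
  rw [dotProduct_comm, dotProduct_mulVec, ← mulVec_transpose, hA]

theorem hasDerivAt_half_mulVec_dotProduct_self {A : Matrix ι ι ℝ} (hA : A.IsSymm)
    {x : ℝ → ι → ℝ} {x' : ι → ℝ} {t : ℝ} (hx : HasDerivAt x x' t) :
    HasDerivAt (fun s => (1 / 2) * (A *ᵥ x s ⬝ᵥ x s)) (A *ᵥ x' ⬝ᵥ x t) t := by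
  refine (((hx.mulVec A).dotProduct hx).const_mul (1 / 2)).congr_deriv ?_
  rw [hA.mulVec_dotProduct_comm (x t) x']
  ring

theorem hasDerivAt_kineticEnergy {J M : Matrix (Fin 3) (Fin 3) ℝ} (D : Matrix (Fin 3) (Fin 3) ℝ)
    (hJ : J.IsSymm) (hM : M.IsSymm)
    {Ω v : ℝ → Fin 3 → ℝ} {dΩ dv : Fin 3 → ℝ} {t : ℝ}
    (hΩ : HasDerivAt Ω dΩ t) (hv : HasDerivAt v dv t) :
    HasDerivAt (fun s => (1 / 2) * ((J *ᵥ Ω s + D *ᵥ v s) ⬝ᵥ Ω s + (Dᵀ *ᵥ Ω s + M *ᵥ v s) ⬝ᵥ v s))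
      ((J *ᵥ dΩ + D *ᵥ dv) ⬝ᵥ Ω t + (Dᵀ *ᵥ dΩ + M *ᵥ dv) ⬝ᵥ v t) t := by
  simpa [fromBlocks_mulVec, sumElim_dotProduct_sumElim, Function.comp_def] using
    hasDerivAt_half_mulVec_dotProduct_self (hJ.fromBlocks rfl hM) (hΩ.sumElim hv)

end Mechanics

theorem gyroscopic_power_eq_zero (Ω v p P : Fin 3 → ℝ) :
    (p ⨯₃ Ω + P ⨯₃ v) ⬝ᵥ Ω + P ⨯₃ Ω ⬝ᵥ v = 0 := by
  rw [add_dotProduct, dotProduct_comm (p ⨯₃ Ω), dot_cross_self, zero_add,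
    dotProduct_comm (P ⨯₃ v), dotProduct_comm (P ⨯₃ Ω), triple_product_permutation Ω,
    triple_product_permutation v, ← cross_anticomm v Ω, dotProduct_neg, add_neg_cancel]

theorem cross_dotProduct_eq_dotProduct_cross (a Γ Ω : Fin 3 → ℝ) :
    a ⨯₃ Γ ⬝ᵥ Ω = a ⬝ᵥ Γ ⨯₃ Ω := by
  rw [dotProduct_comm, triple_product_permutation]

theorem controlled_power_balance (Ω v p P Γ Θ a b w : Fin 3 → ℝ) (k c : ℝ) :
    (p ⨯₃ Ω + P ⨯₃ v - k • (a ⨯₃ Γ) + (k • (b ⨯₃ Γ) + Θ ⨯₃ (c • w))) ⬝ᵥ Ω + P ⨯₃ Ω ⬝ᵥ v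
      + k * (a ⬝ᵥ Γ ⨯₃ Ω) - k * (b ⬝ᵥ Γ ⨯₃ Ω) + c * (w ⬝ᵥ Θ ⨯₃ Ω) = 0 := by
  have hw : Θ ⨯₃ w ⬝ᵥ Ω = -(w ⬝ᵥ Θ ⨯₃ Ω) := by
    rw [← cross_anticomm, neg_dotProduct, cross_dotProduct_eq_dotProduct_cross]
  rw [map_smul]
  simp only [add_dotProduct, sub_dotProduct, smul_dotProduct, smul_eq_mul,
    cross_dotProduct_eq_dotProduct_cross a, cross_dotProduct_eq_dotProduct_cross b, hw]
  have hgyro := gyroscopic_power_eq_zero Ω v p P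
  rw [add_dotProduct] at hgyro
  linear_combination hgyro

/-- Along solutions of the controlled underwater-vehicle system with the steady-motion
control u₁ = m g l (χ + β Γₑ) × Γ + Θ × (‖v_d‖ (M − αI) v_d) (and u₂ = 0), the controlled
energy E = ½(Π·Ω + P·v) + m g l χ·Γ − m g l (χ + β Γₑ)·Γ + ‖v_d‖ ((M − αI) v_d)·Θ
is constant. -/
theorem underwater_vehicle_controlled_energy_conserved
    (I : Set ℝ) (hI : I.OrdConnected)
    (J D M : Matrix (Fin 3) (Fin 3) ℝ) (hJ : J.IsSymm) (hM : M.IsSymm)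
    (m g l α β : ℝ) (χ Γe vd : Fin 3 → ℝ)
    (Ω v Γ Θ : ℝ → Fin 3 → ℝ)
    -- Ω, v, Γ, Θ are differentiable, with derivatives dΩ, dv of Ω, v
    (dΩ dv : ℝ → Fin 3 → ℝ)
    (hΩ : ∀ t ∈ I, HasDerivAt Ω (dΩ t) t) (hv : ∀ t ∈ I, HasDerivAt v (dv t) t)
    -- the momenta Π = JΩ + Dv and P = DᵀΩ + Mv
    (Pang P : ℝ → Fin 3 → ℝ)
    (hPangdef : ∀ t, Pang t = J *ᵥ Ω t + D *ᵥ v t)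
    (hPdef : ∀ t, P t = Dᵀ *ᵥ Ω t + M *ᵥ v t)
    -- the control u₁
    (u₁ : ℝ → Fin 3 → ℝ)
    (hu₁ : ∀ t ∈ I, u₁ t = (m * g * l) • ((χ + β • Γe) ⨯₃ Γ t)
      + Θ t ⨯₃ (eNorm vd • ((M - α • (1 : Matrix (Fin 3) (Fin 3) ℝ)) *ᵥ vd)))
    -- the controlled underwater-vehicle equations
    (hPang : ∀ t ∈ I,
      J *ᵥ dΩ t + D *ᵥ dv t
        = Pang t ⨯₃ Ω t + P t ⨯₃ v t - (m * g * l) • (χ ⨯₃ Γ t) + u₁ t)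
    (hP : ∀ t ∈ I, Dᵀ *ᵥ dΩ t + M *ᵥ dv t = P t ⨯₃ Ω t)
    (hΓ : ∀ t ∈ I, HasDerivAt Γ (Γ t ⨯₃ Ω t) t)
    (hΘ : ∀ t ∈ I, HasDerivAt Θ (Θ t ⨯₃ Ω t) t)
    -- the controlled energy
    (E : ℝ → ℝ)
    (hE : ∀ t, E t = (1 / 2) * (Pang t ⬝ᵥ Ω t + P t ⬝ᵥ v t)
      + m * g * l * (χ ⬝ᵥ Γ t) - m * g * l * ((χ + β • Γe) ⬝ᵥ Γ t)
      + eNorm vd * (((M - α • (1 : Matrix (Fin 3) (Fin 3) ℝ)) *ᵥ vd) ⬝ᵥ Θ t)) :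
    -- E is constant on I
    ∀ s ∈ I, ∀ t ∈ I, E s = E t := by
  set w := (M - α • (1 : Matrix (Fin 3) (Fin 3) ℝ)) *ᵥ vd
  have hE' : E = fun s => (1 / 2) * ((J *ᵥ Ω s + D *ᵥ v s) ⬝ᵥ Ω s + (Dᵀ *ᵥ Ω s + M *ᵥ v s) ⬝ᵥ v s)
      + m * g * l * (χ ⬝ᵥ Γ s) - m * g * l * ((χ + β • Γe) ⬝ᵥ Γ s) + eNorm vd * (w ⬝ᵥ Θ s) :=
    funext fun s => by rw [hE, hPangdef, hPdef]
  refine hI.eq_of_hasDerivAt_eq_zero fun t ht => ?_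
  have hderiv := (((hasDerivAt_kineticEnergy D hJ hM (hΩ t ht) (hv t ht)).add
    (((hΓ t ht).const_dotProduct χ).const_mul (m * g * l))).sub
    (((hΓ t ht).const_dotProduct (χ + β • Γe)).const_mul (m * g * l))).add
    (((hΘ t ht).const_dotProduct w).const_mul (eNorm vd))
  rw [hE']
  refine hderiv.congr_deriv ?_
  rw [hPang t ht, hP t ht, hu₁ t ht]
  exact controlled_power_balance _ _ _ _ _ _ _ _ _ _ _
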